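/- arXiv:1702.08694 — 6 statements merged into one kernel-verified Lean document; each statement's English description precedes it below -/
import Mathlib

section
/- Let a, b be real numbers with 0 < a ≤ b ≤ 1/2. Then for every probability vector p ∈ 𝒫(a,b), the Kullback–Leibler divergence satisfies D_KL(p, p_E(a,b)) ≤ B(a,b) = a·log(1/b) + (b−a)·log((b−a)/((1−a)·b)) + (1−b)·log(1/(1−a)). -/
open Real

private lemma split_log (p q : ℝ) (hp : 0 ≤ p) (hq : 0 < q) :
    p * log (p / q) = p * log p - p * log q := by
  rcases eq_or_lt_of_le hp with h | h
  · simp [← h]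
  · rw [Real.log_div h.ne' hq.ne']; ring

private lemma chord (x y l : ℝ) (hx : 0 ≤ x) (hy : 0 ≤ y) (hl : 0 ≤ l) (hl1 : l ≤ 1) :
    ((1 - l) * x + l * y) * log ((1 - l) * x + l * y)
      ≤ (1 - l) * (x * log x) + l * (y * log y) := by
  have h := Real.convexOn_mul_log.2 (Set.mem_Ici.mpr hx) (Set.mem_Ici.mpr hy)
    (by linarith : (0:ℝ) ≤ 1 - l) hl (by ring)
  simpa [smul_eq_mul] using h

/-- Theorem 1 (upper bound): for `0 < a ≤ b ≤ 1/2` and every probability vector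
`p = (p₁,p₂,p₃,p₄) ∈ 𝒫(a,b)` (nonnegative entries summing to `1` with marginals
`p₁+p₂ = a`, `p₁+p₃ = b`), the KL divergence of `p` from the independence vector
`p_E(a,b) = (ab, a(1-b), (1-a)b, (1-a)(1-b))` is at most
`B(a,b) = a log(1/b) + (b-a) log((b-a)/((1-a)b)) + (1-b) log(1/(1-a))`.
(The convention `0 · log(0/q) = 0` holds automatically since `Real.log 0 = 0`
and `0 * x = 0`.) -/
theorem kl_upper_bound (a b : ℝ) (ha : 0 < a) (hab : a ≤ b) (hb : b ≤ 1/2)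
    (p₁ p₂ p₃ p₄ : ℝ)
    (hp₁ : 0 ≤ p₁) (hp₂ : 0 ≤ p₂) (hp₃ : 0 ≤ p₃) (hp₄ : 0 ≤ p₄)
    (hsum : p₁ + p₂ + p₃ + p₄ = 1)
    (hma : p₁ + p₂ = a) (hmb : p₁ + p₃ = b) :
    p₁ * log (p₁ / (a * b)) + p₂ * log (p₂ / (a * (1 - b)))
      + p₃ * log (p₃ / ((1 - a) * b)) + p₄ * log (p₄ / ((1 - a) * (1 - b)))
    ≤ a * log (1 / b) + (b - a) * log ((b - a) / ((1 - a) * b))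
      + (1 - b) * log (1 / (1 - a)) := by
  have hb0 : 0 < b := lt_of_lt_of_le ha hab
  have hb1 : 0 < 1 - b := by linarith
  have ha1 : 0 < 1 - a := by linarith
  have hba : 0 ≤ b - a := by linarith
  have h1ab : 0 ≤ 1 - a - b := by linarith
  -- fix sum identity
  have e1 : p₃ + p₄ = 1 - a := by linarith
  have e2 : p₂ + p₄ = 1 - b := by linarith
  have hfix : p₁ * (log a + log b) + p₂ * (log a + log (1 - b))
      + p₃ * (log (1 - a) + log b) + p₄ * (log (1 - a) + log (1 - b))
      = a * log a + (1 - a) * log (1 - a) + b * log b + (1 - b) * log (1 - b) := by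
    linear_combination (log a) * hma + (log (1 - a)) * e1 + (log b) * hmb
      + (log (1 - b)) * e2
  -- endpoint inequality
  have hend : b * log b + (1 - a - b) * log (1 - a - b)
      ≤ (b - a) * log (b - a) + (1 - b) * log (1 - b) := by
    set d : ℝ := 1 + a - 2 * b with hd
    have hd0 : 0 < d := by simp only [hd]; linarith
    set m : ℝ := a / d with hm
    have hm0 : 0 ≤ m := div_nonneg ha.le hd0.le
    have hm1 : m ≤ 1 := (div_le_one hd0).mpr (by linarith)
    have hmd : m * d = a := div_mul_cancel₀ a hd0.ne'
    have c1 := chord (b - a) (1 - b) m hba hb1.le hm0 hm1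
    have c2 := chord (1 - b) (b - a) m hb1.le hba hm0 hm1
    rw [show (1 - m) * (b - a) + m * (1 - b) = b from by linear_combination hmd] at c1
    rw [show (1 - m) * (1 - b) + m * (b - a) = 1 - a - b from by linear_combination -hmd] at c2
    calc b * log b + (1 - a - b) * log (1 - a - b)
        ≤ ((1 - m) * ((b - a) * log (b - a)) + m * ((1 - b) * log (1 - b)))
          + ((1 - m) * ((1 - b) * log (1 - b)) + m * ((b - a) * log (b - a))) :=
          add_le_add c1 c2
      _ = (b - a) * log (b - a) + (1 - b) * log (1 - b) := by ring
  -- key convexity bound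
  have key : p₁ * log p₁ + p₂ * log p₂ + p₃ * log p₃ + p₄ * log p₄
      ≤ a * log a + ((b - a) * log (b - a) + (1 - b) * log (1 - b)) := by
    set l : ℝ := p₁ / a with hl
    have hl0 : 0 ≤ l := div_nonneg hp₁ ha.le
    have hl1 : l ≤ 1 := (div_le_one ha).mpr (by linarith)
    have hla : l * a = p₁ := div_mul_cancel₀ p₁ ha.ne'
    have c1 := chord 0 a l le_rfl ha.le hl0 hl1
    have c2 := chord a 0 l ha.le le_rfl hl0 hl1
    have c3 := chord b (b - a) l hb0.le hba hl0 hl1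
    have c4 := chord (1 - a - b) (1 - b) l h1ab hb1.le hl0 hl1
    rw [show (1 - l) * 0 + l * a = p₁ from by linear_combination hla] at c1
    rw [show (1 - l) * a + l * 0 = p₂ from by linear_combination -hla - hma] at c2
    rw [show (1 - l) * b + l * (b - a) = p₃ from by linear_combination -hla - hmb] at c3
    rw [show (1 - l) * (1 - a - b) + l * (1 - b) = p₄ from by
      linear_combination hla - hsum + hma + hmb] at c4
    have hmul := mul_le_mul_of_nonneg_left hend (by linarith : (0:ℝ) ≤ 1 - l)
    calc p₁ * log p₁ + p₂ * log p₂ + p₃ * log p₃ + p₄ * log p₄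
        ≤ ((1 - l) * (0 * log 0) + l * (a * log a))
          + ((1 - l) * (a * log a) + l * (0 * log 0))
          + ((1 - l) * (b * log b) + l * ((b - a) * log (b - a)))
          + ((1 - l) * ((1 - a - b) * log (1 - a - b)) + l * ((1 - b) * log (1 - b))) :=
          add_le_add (add_le_add (add_le_add c1 c2) c3) c4
      _ = a * log a + (1 - l) * (b * log b + (1 - a - b) * log (1 - a - b))
          + l * ((b - a) * log (b - a) + (1 - b) * log (1 - b)) := by
          simp only [Real.log_zero, mul_zero, zero_mul]; ring
      _ ≤ a * log a + (1 - l) * ((b - a) * log (b - a) + (1 - b) * log (1 - b))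
          + l * ((b - a) * log (b - a) + (1 - b) * log (1 - b)) := by linarith
      _ = a * log a + ((b - a) * log (b - a) + (1 - b) * log (1 - b)) := by ring
  -- rewrite goal
  rw [split_log p₁ (a * b) hp₁ (mul_pos ha hb0),
      split_log p₂ (a * (1 - b)) hp₂ (mul_pos ha hb1),
      split_log p₃ ((1 - a) * b) hp₃ (mul_pos ha1 hb0),
      split_log p₄ ((1 - a) * (1 - b)) hp₄ (mul_pos ha1 hb1),
      split_log (b - a) ((1 - a) * b) hba (mul_pos ha1 hb0),
      Real.log_mul ha.ne' hb0.ne', Real.log_mul ha.ne' hb1.ne',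
      Real.log_mul ha1.ne' hb0.ne', Real.log_mul ha1.ne' hb1.ne',
      one_div, one_div, Real.log_inv, Real.log_inv]
  linarith [key, hfix]
end

section
/- Let a, b be real numbers with 0 < a ≤ b ≤ 1/2. Then for every p = (p₁,p₂,p₃,p₄) ∈ 𝒫(a,b) with p₁ > 0 and p₂ > 0, the strict inequality D_KL(p, p_E(a,b)) < B(a,b) holds. -/
/-!
With the marginals fixed, the cross-entropy term of `D_KL(p, p_E(a,b))` is fixed as well,
so the divergence is the negative entropy `∑ pᵢ log pᵢ` plus a constant, and `B(a,b)` is its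
value at the vertex `(a, 0, b - a, 1 - b)` of `𝒫(a,b)`. Merging the two positive cells `p₁, p₂`
into one strictly increases `∑ x log x`; since `b ≤ 1/2`, the pair `(p₃, p₄)` lies between
`b - a` and `1 - b` with the same sum, so convexity of `x log x` bounds the other two cells.
-/

open Real

theorem ConvexOn.map_add_map_add_sub_le {s : Set ℝ} {f : ℝ → ℝ} (hf : ConvexOn ℝ s f)
    {c d x : ℝ} (hc : c ∈ s) (hd : d ∈ s) (hcx : c ≤ x) (hxd : x ≤ d) :
    f x + f (c + d - x) ≤ f c + f d := by
  rcases hcx.eq_or_lt with rfl | hcx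
  · rw [add_sub_cancel_left]
  have hdc : d - c ≠ 0 := by linarith
  set θ := (d - x) / (d - c)
  have hθ₀ : 0 ≤ θ := div_nonneg (by linarith) (by linarith)
  have hθ₁ : 0 ≤ 1 - θ := by
    rw [sub_nonneg, div_le_one (by linarith)]
    linarith
  have hx : θ • c + (1 - θ) • d = x := by
    simp only [θ, smul_eq_mul]
    field_simp
    ring
  have hy : (1 - θ) • c + θ • d = c + d - x := by
    simp only [θ, smul_eq_mul]
    field_simp
    ring
  have h₁ := hf.2 hc hd hθ₀ hθ₁ (by ring)
  have h₂ := hf.2 hc hd hθ₁ hθ₀ (by ring)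
  rw [hx] at h₁
  rw [hy] at h₂
  simp only [smul_eq_mul] at h₁ h₂
  linear_combination h₁ + h₂

namespace Real

lemma mul_log_add_mul_log_lt {x y : ℝ} (hx : 0 < x) (hy : 0 < y) :
    x * log x + y * log y < (x + y) * log (x + y) := by
  have hx' := mul_lt_mul_of_pos_left (log_lt_log hx (lt_add_of_pos_right x hy)) hx
  have hy' := mul_lt_mul_of_pos_left (log_lt_log hy (lt_add_of_pos_left y hx)) hy
  linear_combination hx' + hy'

/-- Holds also for `p = 0`, where `log (0 / (q * r)) = log 0 = 0`. -/
lemma mul_log_div_mul (p : ℝ) {q r : ℝ} (hq : q ≠ 0) (hr : r ≠ 0) :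
    p * log (p / (q * r)) = p * log p - p * log q - p * log r := by
  rcases eq_or_ne p 0 with rfl | hp
  · simp
  rw [log_div hp (mul_ne_zero hq hr), log_mul hq hr]
  ring

end Real

theorem kl_upper_bound_strict_general (a b : ℝ) (ha : 0 < a) (hab : a ≤ b) (hb : b ≤ 1/2)
    (p₁ p₂ p₃ p₄ : ℝ)
    (hp₁ : 0 < p₁) (hp₂ : 0 < p₂)
    (hsum : p₁ + p₂ + p₃ + p₄ = 1)
    (hma : p₁ + p₂ = a) (hmb : p₁ + p₃ = b) :
    p₁ * log (p₁ / (a * b)) + p₂ * log (p₂ / (a * (1 - b)))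
      + p₃ * log (p₃ / ((1 - a) * b)) + p₄ * log (p₄ / ((1 - a) * (1 - b)))
    < a * log (1 / b) + (b - a) * log ((b - a) / ((1 - a) * b))
      + (1 - b) * log (1 / (1 - a)) := by
  have hb₀ : b ≠ 0 := by linarith
  have ha₁ : 1 - a ≠ 0 := by linarith
  have hb₁ : 1 - b ≠ 0 := by linarith
  have hcells₁₂ : p₁ * log p₁ + p₂ * log p₂ < a * log a :=
    hma ▸ mul_log_add_mul_log_lt hp₁ hp₂
  have hcells₃₄ :
      p₃ * log p₃ + p₄ * log p₄ ≤ (b - a) * log (b - a) + (1 - b) * log (1 - b) := by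
    have h := convexOn_mul_log.map_add_map_add_sub_le (c := b - a) (d := 1 - b)
      (Set.mem_Ici.2 (sub_nonneg.2 hab)) (Set.mem_Ici.2 (by linarith))
      (show b - a ≤ p₃ by linarith) (show p₃ ≤ 1 - b by linarith)
    rwa [show b - a + (1 - b) - p₃ = p₄ by linarith] at h
  rw [mul_log_div_mul p₁ ha.ne' hb₀, mul_log_div_mul p₂ ha.ne' hb₁, mul_log_div_mul p₃ ha₁ hb₀,
    mul_log_div_mul p₄ ha₁ hb₁, mul_log_div_mul (b - a) ha₁ hb₀, one_div, one_div, log_inv,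
    log_inv]
  linear_combination hcells₁₂ + hcells₃₄ - log a * hma - log b * hmb
    - log (1 - a) * (hsum - hma) - log (1 - b) * (hsum - hmb)

/-- Strict version of the upper bound: for `0 < a ≤ b ≤ 1/2` and every
`p = (p₁,p₂,p₃,p₄) ∈ 𝒫(a,b)` with `p₁ > 0` and `p₂ > 0`, the KL divergence of `p`
from `p_E(a,b)` is strictly smaller than `B(a,b)`. -/
theorem kl_upper_bound_strict (a b : ℝ) (ha : 0 < a) (hab : a ≤ b) (hb : b ≤ 1/2)
    (p₁ p₂ p₃ p₄ : ℝ)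
    (hp₁ : 0 < p₁) (hp₂ : 0 < p₂) (hp₃ : 0 ≤ p₃) (hp₄ : 0 ≤ p₄)
    (hsum : p₁ + p₂ + p₃ + p₄ = 1)
    (hma : p₁ + p₂ = a) (hmb : p₁ + p₃ = b) :
    p₁ * log (p₁ / (a * b)) + p₂ * log (p₂ / (a * (1 - b)))
      + p₃ * log (p₃ / ((1 - a) * b)) + p₄ * log (p₄ / ((1 - a) * (1 - b)))
    < a * log (1 / b) + (b - a) * log ((b - a) / ((1 - a) * b))
      + (1 - b) * log (1 / (1 - a)) :=
  kl_upper_bound_strict_general a b ha hab hb p₁ p₂ p₃ p₄ hp₁ hp₂ hsum hma hmb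
end

section
/- Let a, b be real numbers with 0 < a ≤ b < 1 and a < 1. Then the vector p* = (a, 0, b−a, 1−b) lies in 𝒫(a,b) and satisfies D_KL(p*, p_E(a,b)) = B(a,b) exactly (using the convention 0·log 0 = 0). Consequently, when additionally b ≤ 1/2, B(a,b) is the maximum of D_KL(p, p_E(a,b)) over p ∈ 𝒫(a,b), i.e., the upper bound of Theorem 1 is tight. -/
/-!
On the fibre `𝒫(a,b)` the cross entropy `-∑ pᵢ log qᵢ` against `p_E(a,b)` depends only on the
marginals, so maximising `D_KL(p, p_E(a,b))` means maximising `∑ pᵢ log pᵢ`. Parametrising the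
fibre by `t = p₁ ∈ [0, a]` makes every `pᵢ` affine in `t`, so this sum is convex in `t` and is
maximal at `t = 0` or `t = a`. The endpoint `t = a` is `p*`, and it wins when `b ≤ 1/2` because
then `(b, 1 - a - b)` lies between `(b - a, 1 - b)` with the same sum.
-/

open Real Set

lemma mul_log_div_mul {p q r : ℝ} (hq : q ≠ 0) (hr : r ≠ 0) :
    p * log (p / (q * r)) = p * log p - p * log q - p * log r := by
  rcases eq_or_ne p 0 with rfl | hp
  · simp
  · rw [log_div hp (mul_ne_zero hq hr), log_mul hq hr]
    ring

lemma convexOn_mul_log_comp_affine (g : ℝ → ℝ) (c d : ℝ) (hg : ∀ t, g t = c + d * t) :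
    ConvexOn ℝ {t | 0 ≤ g t} fun t ↦ g t * log (g t) := by
  have hcomb : ∀ x y α β : ℝ, α + β = 1 → g (α • x + β • y) = α • g x + β • g y := by
    intro x y α β hαβ
    simp only [hg, smul_eq_mul]
    linear_combination (-c) * hαβ
  refine ⟨fun x hx y hy α β hα hβ hαβ ↦ ?_, fun x hx y hy α β hα hβ hαβ ↦ ?_⟩
  · show 0 ≤ g (α • x + β • y)
    rw [hcomb x y α β hαβ]
    exact add_nonneg (smul_nonneg hα hx) (smul_nonneg hβ hy)
  · simpa only [hcomb x y α β hαβ] using convexOn_mul_log.2 hx hy hα hβ hαβ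

lemma mul_log_add_mul_log_le {u v x : ℝ} (hu : 0 ≤ u) (hux : u ≤ x) (hxv : x ≤ v) :
    x * log x + (u + v - x) * log (u + v - x) ≤ u * log u + v * log v := by
  have hconv : ConvexOn ℝ (Icc u v) fun t ↦ t * log t + (u + v - t) * log (u + v - t) := by
    refine (convexOn_mul_log.subset ?_ (convex_Icc u v)).add
      ((convexOn_mul_log_comp_affine (fun t ↦ u + v - t) (u + v) (-1) fun t ↦ by ring).subset
        ?_ (convex_Icc u v))
    · exact fun t ht ↦ hu.trans ht.1
    · exact fun t ht ↦ show 0 ≤ u + v - t by linarith [ht.1, ht.2]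
  have huv : u ≤ v := hux.trans hxv
  have := hconv.le_max_of_mem_Icc ⟨le_rfl, huv⟩ ⟨huv, le_rfl⟩ ⟨hux, hxv⟩
  rwa [add_sub_cancel_left, add_sub_cancel_right, add_comm (v * log v), max_self] at this

lemma fiber_sum_mul_log_le {a b t : ℝ} (hab : a ≤ b) (hb : b ≤ 1 / 2) (ht : t ∈ Icc 0 a) :
    t * log t + (a - t) * log (a - t) + (b - t) * log (b - t)
        + (1 - a - b + t) * log (1 - a - b + t)
      ≤ a * log a + (b - a) * log (b - a) + (1 - b) * log (1 - b) := by
  have ha : 0 ≤ a := ht.1.trans ht.2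
  have hconv : ConvexOn ℝ (Icc 0 a) fun t ↦ t * log t + (a - t) * log (a - t)
      + (b - t) * log (b - t) + (1 - a - b + t) * log (1 - a - b + t) := by
    have h₁ := convexOn_mul_log.subset (fun t (ht : t ∈ Icc 0 a) ↦ ht.1) (convex_Icc 0 a)
    have h₂ := (convexOn_mul_log_comp_affine (fun t ↦ a - t) a (-1) fun t ↦ by ring).subset
      (fun t (ht : t ∈ Icc 0 a) ↦ show 0 ≤ a - t by linarith [ht.2]) (convex_Icc 0 a)
    have h₃ := (convexOn_mul_log_comp_affine (fun t ↦ b - t) b (-1) fun t ↦ by ring).subset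
      (fun t (ht : t ∈ Icc 0 a) ↦ show 0 ≤ b - t by linarith [ht.2]) (convex_Icc 0 a)
    have h₄ := (convexOn_mul_log_comp_affine (fun t ↦ 1 - a - b + t) (1 - a - b) 1
      fun t ↦ by ring).subset
      (fun t (ht : t ∈ Icc 0 a) ↦ show 0 ≤ 1 - a - b + t by linarith [ht.1]) (convex_Icc 0 a)
    exact ((h₁.add h₂).add h₃).add h₄
  have hmax := hconv.le_max_of_mem_Icc ⟨le_rfl, ha⟩ ⟨ha, le_rfl⟩ ht
  have hend : b * log b + (1 - a - b) * log (1 - a - b)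
      ≤ (b - a) * log (b - a) + (1 - b) * log (1 - b) := by
    have := mul_log_add_mul_log_le (u := b - a) (v := 1 - b) (x := b)
      (by linarith) (by linarith) (by linarith)
    rwa [show b - a + (1 - b) - b = 1 - a - b by ring] at this
  simp only [sub_zero, add_zero, sub_self, zero_add, log_zero, mul_zero] at hmax
  rw [show 1 - a - b + a = 1 - b by ring] at hmax
  exact hmax.trans (max_le (by linarith) (by linarith))

lemma kl_eq_sum_mul_log_sub {a b p₁ p₂ p₃ p₄ : ℝ} (ha₀ : a ≠ 0) (ha₁ : a ≠ 1) (hb₀ : b ≠ 0)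
    (hb₁ : b ≠ 1) (hsum : p₁ + p₂ + p₃ + p₄ = 1) (hpa : p₁ + p₂ = a) (hpb : p₁ + p₃ = b) :
    p₁ * log (p₁ / (a * b)) + p₂ * log (p₂ / (a * (1 - b)))
        + p₃ * log (p₃ / ((1 - a) * b)) + p₄ * log (p₄ / ((1 - a) * (1 - b)))
      = p₁ * log p₁ + p₂ * log p₂ + p₃ * log p₃ + p₄ * log p₄
        - (a * log a + (1 - a) * log (1 - a) + b * log b + (1 - b) * log (1 - b)) := by
  have ha₁' : 1 - a ≠ 0 := sub_ne_zero.2 (Ne.symm ha₁)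
  have hb₁' : 1 - b ≠ 0 := sub_ne_zero.2 (Ne.symm hb₁)
  rw [mul_log_div_mul ha₀ hb₀, mul_log_div_mul ha₀ hb₁', mul_log_div_mul ha₁' hb₀,
    mul_log_div_mul ha₁' hb₁']
  linear_combination (log (1 - a) - log a) * hpa + (log (1 - b) - log b) * hpb
    - (log (1 - a) + log (1 - b)) * hsum

theorem kl_upper_bound_tight_general (a b : ℝ) (ha : 0 < a) (hab : a ≤ b) (hb : b < 1) :
    (0 ≤ a ∧ 0 ≤ (0 : ℝ) ∧ 0 ≤ b - a ∧ 0 ≤ 1 - b ∧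
      a + 0 + (b - a) + (1 - b) = 1 ∧ a + 0 = a ∧ a + (b - a) = b) ∧
    (a * log (a / (a * b)) + 0 * log (0 / (a * (1 - b)))
        + (b - a) * log ((b - a) / ((1 - a) * b))
        + (1 - b) * log ((1 - b) / ((1 - a) * (1 - b)))
      = a * log (1 / b) + (b - a) * log ((b - a) / ((1 - a) * b))
        + (1 - b) * log (1 / (1 - a))) ∧
    (b ≤ 1/2 → ∀ p₁ p₂ p₃ p₄ : ℝ, 0 ≤ p₁ → 0 ≤ p₂ → 0 ≤ p₃ → 0 ≤ p₄ →
      p₁ + p₂ + p₃ + p₄ = 1 → p₁ + p₂ = a → p₁ + p₃ = b →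
      p₁ * log (p₁ / (a * b)) + p₂ * log (p₂ / (a * (1 - b)))
        + p₃ * log (p₃ / ((1 - a) * b)) + p₄ * log (p₄ / ((1 - a) * (1 - b)))
      ≤ a * log (1 / b) + (b - a) * log ((b - a) / ((1 - a) * b))
        + (1 - b) * log (1 / (1 - a))) := by
  have hb₀ : 0 < b := ha.trans_le hab
  have ha₁ : a < 1 := hab.trans_lt hb
  have hpstar : a * log (a / (a * b)) + 0 * log (0 / (a * (1 - b)))
        + (b - a) * log ((b - a) / ((1 - a) * b))
        + (1 - b) * log ((1 - b) / ((1 - a) * (1 - b)))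
      = a * log (1 / b) + (b - a) * log ((b - a) / ((1 - a) * b))
        + (1 - b) * log (1 / (1 - a)) := by
    have hb₁ : 1 - b ≠ 0 := by linarith
    rw [div_mul_cancel_left₀ ha.ne', div_mul_cancel_right₀ hb₁, one_div, one_div,
      zero_mul, add_zero]
  refine ⟨⟨ha.le, le_rfl, by linarith, by linarith, by ring, by ring, by ring⟩, hpstar, ?_⟩
  intro hb2 p₁ p₂ p₃ p₄ h₁ h₂ _ _ hsum hpa hpb
  rw [← hpstar, kl_eq_sum_mul_log_sub ha.ne' ha₁.ne hb₀.ne' hb.ne hsum hpa hpb,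
    kl_eq_sum_mul_log_sub ha.ne' ha₁.ne hb₀.ne' hb.ne (by ring) (by ring) (by ring)]
  obtain rfl : p₂ = a - p₁ := by linarith
  obtain rfl : p₃ = b - p₁ := by linarith
  obtain rfl : p₄ = 1 - a - b + p₁ := by linarith
  have := fiber_sum_mul_log_le hab hb2 ⟨h₁, by linarith⟩
  simp only [zero_mul, add_zero]
  linarith

/-- Tightness of the bound: for `0 < a ≤ b < 1` (and `a < 1`), the vector
`p* = (a, 0, b-a, 1-b)` lies in `𝒫(a,b)` and attains `D_KL(p*, p_E(a,b)) = B(a,b)`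
exactly; consequently, when additionally `b ≤ 1/2`, `B(a,b)` is the maximum of
the KL divergence over all of `𝒫(a,b)`. -/
theorem kl_upper_bound_tight (a b : ℝ) (ha : 0 < a) (hab : a ≤ b) (hb : b < 1)
    (ha1 : a < 1) :
    (0 ≤ a ∧ 0 ≤ (0 : ℝ) ∧ 0 ≤ b - a ∧ 0 ≤ 1 - b ∧
      a + 0 + (b - a) + (1 - b) = 1 ∧ a + 0 = a ∧ a + (b - a) = b) ∧
    (a * log (a / (a * b)) + 0 * log (0 / (a * (1 - b)))
        + (b - a) * log ((b - a) / ((1 - a) * b))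
        + (1 - b) * log ((1 - b) / ((1 - a) * (1 - b)))
      = a * log (1 / b) + (b - a) * log ((b - a) / ((1 - a) * b))
        + (1 - b) * log (1 / (1 - a))) ∧
    (b ≤ 1/2 → ∀ p₁ p₂ p₃ p₄ : ℝ, 0 ≤ p₁ → 0 ≤ p₂ → 0 ≤ p₃ → 0 ≤ p₄ →
      p₁ + p₂ + p₃ + p₄ = 1 → p₁ + p₂ = a → p₁ + p₃ = b →
      p₁ * log (p₁ / (a * b)) + p₂ * log (p₂ / (a * (1 - b)))
        + p₃ * log (p₃ / ((1 - a) * b)) + p₄ * log (p₄ / ((1 - a) * (1 - b)))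
      ≤ a * log (1 / b) + (b - a) * log ((b - a) / ((1 - a) * b))
        + (1 - b) * log (1 / (1 - a))) :=
  kl_upper_bound_tight_general a b ha hab hb
end

section
/- Let a, b be real numbers with 0 ≤ a ≤ b ≤ 1/2. Then δ(a,b) := −b·log b + (1−b)·log(1−b) + (b−a)·log(b−a) − (1−b−a)·log(1−b−a) ≥ 0 (with the convention 0·log 0 = 0). Equivalently, the right-endpoint value B(a,b) of the KL divergence along the family (x, a−x, b−x, 1−a−b+x) dominates the left-endpoint value a·log(1/(1−b)) + b·log(1/(1−a)) + (1−a−b)·log((1−a−b)/((1−a)(1−b))). -/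
open Real

private lemma hlog1 (c d : ℝ) (hc : 0 ≤ c) (hd : 0 < c → 0 < d) :
    c * log (c / d) = c * log c - c * log d := by
  rcases hc.eq_or_lt with h | h
  · simp [← h]
  · rw [log_div h.ne' (hd h).ne']; ring

private lemma hlog2 (c x y : ℝ) (hc : 0 ≤ c) (h : 0 < c → (x ≠ 0 ∧ y ≠ 0)) :
    c * log (x * y) = c * log x + c * log y := by
  rcases hc.eq_or_lt with h0 | h0
  · simp [← h0]
  · rw [log_mul (h h0).1 (h h0).2]; ring

private lemma delta_aux (a b : ℝ) (ha : 0 ≤ a) (hab : a ≤ b) (hb : b ≤ 1/2) :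
    0 ≤ -b * log b + (1 - b) * log (1 - b) + (b - a) * log (b - a)
        - (1 - b - a) * log (1 - b - a) := by
  rcases ha.eq_or_lt with h0 | h0
  · rw [← h0]
    simp only [sub_zero]
    linarith
  · have hdpos : 0 < 1 - 2*b + a := by linarith
    set t : ℝ := a / (1 - 2*b + a) with htdef
    have ht0 : 0 ≤ t := div_nonneg h0.le hdpos.le
    have ht1 : t ≤ 1 := (div_le_one hdpos).2 (by linarith)
    have hx : (0:ℝ) ≤ b - a := by linarith
    have hy : (0:ℝ) ≤ 1 - b := by linarith
    have hta : t * (1 - 2*b + a) = a := div_mul_cancel₀ a hdpos.ne'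
    have e1 : (1-t) * (b-a) + t * (1-b) = b := by linear_combination hta
    have e2 : t * (b-a) + (1-t) * (1-b) = 1 - b - a := by linear_combination -hta
    have c1 := Real.convexOn_mul_log.2 (Set.mem_Ici.2 hx) (Set.mem_Ici.2 hy)
      (by linarith : (0:ℝ) ≤ 1 - t) ht0 (by ring)
    have c2 := Real.convexOn_mul_log.2 (Set.mem_Ici.2 hx) (Set.mem_Ici.2 hy)
      ht0 (by linarith : (0:ℝ) ≤ 1 - t) (by ring)
    simp only [smul_eq_mul] at c1 c2
    rw [e1] at c1
    rw [e2] at c2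
    nlinarith [c1, c2]

/-- For `0 ≤ a ≤ b ≤ 1/2`, the endpoint difference
`δ(a,b) = -b log b + (1-b) log(1-b) + (b-a) log(b-a) - (1-b-a) log(1-b-a)` is
nonnegative; equivalently, the right-endpoint value `B(a,b)` of the KL divergence
along the family `(x, a-x, b-x, 1-a-b+x)` dominates the left-endpoint value
`a log(1/(1-b)) + b log(1/(1-a)) + (1-a-b) log((1-a-b)/((1-a)(1-b)))`.
(All `0 · log 0 = 0` conventions are automatic since `Real.log 0 = 0`.) -/
theorem delta_nonneg (a b : ℝ) (ha : 0 ≤ a) (hab : a ≤ b) (hb : b ≤ 1/2) :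
    0 ≤ -b * log b + (1 - b) * log (1 - b) + (b - a) * log (b - a)
        - (1 - b - a) * log (1 - b - a) ∧
    a * log (1 / (1 - b)) + b * log (1 / (1 - a))
        + (1 - a - b) * log ((1 - a - b) / ((1 - a) * (1 - b)))
      ≤ a * log (1 / b) + (b - a) * log ((b - a) / ((1 - a) * b))
        + (1 - b) * log (1 / (1 - a)) := by
  have hD := delta_aux a b ha hab hb
  refine ⟨hD, ?_⟩
  have h1a : (0:ℝ) < 1 - a := by linarith
  have h1b : (0:ℝ) < 1 - b := by linarith
  rw [one_div, one_div, one_div, log_inv, log_inv, log_inv]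
  rw [hlog1 (b-a) ((1-a)*b) (by linarith) (fun h => mul_pos h1a (by linarith)),
      hlog1 (1-a-b) ((1-a)*(1-b)) (by linarith) (fun _ => mul_pos h1a h1b),
      hlog2 (b-a) (1-a) b (by linarith) (fun h => ⟨h1a.ne', ne_of_gt (by linarith)⟩),
      hlog2 (1-a-b) (1-a) (1-b) (by linarith) (fun _ => ⟨h1a.ne', h1b.ne'⟩)]
  have he : (1:ℝ) - a - b = 1 - b - a := by ring
  rw [he]
  linarith [hD]
end

section
/- Let a, b be real numbers with 0 < a ≤ b ≤ 1/2. Then B(a,b) ≤ −b·log b − (1−b)·log(1−b), i.e., the tight upper bound on the KL divergence is at most the binary entropy of b, with equality when a = b. -/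
open Real

/-- For `0 < a ≤ b ≤ 1/2`, the tight upper bound `B(a,b)` on the KL divergence is
at most the binary entropy of `b`, `-b log b - (1-b) log(1-b)`, with equality when
`a = b`. -/
theorem B_le_entropy (a b : ℝ) (ha : 0 < a) (hab : a ≤ b) (hb : b ≤ 1/2) :
    (a * log (1 / b) + (b - a) * log ((b - a) / ((1 - a) * b))
        + (1 - b) * log (1 / (1 - a))
      ≤ -b * log b - (1 - b) * log (1 - b)) ∧
    (a = b → a * log (1 / b) + (b - a) * log ((b - a) / ((1 - a) * b))
        + (1 - b) * log (1 / (1 - a))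
      = -b * log b - (1 - b) * log (1 - b)) := by
  have hb0 : 0 < b := lt_of_lt_of_le ha hab
  have h1b : 0 < 1 - b := by linarith
  have h1a : 0 < 1 - a := by linarith
  rcases eq_or_lt_of_le hab with heq | hlt
  · subst heq
    have key : a * log (1 / a) + (a - a) * log ((a - a) / ((1 - a) * a))
        + (1 - a) * log (1 / (1 - a))
        = -a * log a - (1 - a) * log (1 - a) := by
      rw [sub_self, zero_mul, one_div, one_div, Real.log_inv, Real.log_inv]
      ring
    exact ⟨key.le, fun _ => key⟩
  · have hc : 0 < b - a := by linarith
    have h1 : log (b - a) ≤ log (1 - a) :=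
      Real.log_le_log hc (by linarith)
    have h2 : log (1 - b) ≤ log (1 - a) :=
      Real.log_le_log h1b (by linarith)
    have key : (b - a) * log (b - a) + (1 - b) * log (1 - b) ≤ (1 - a) * log (1 - a) := by
      have t1 : (b - a) * log (b - a) ≤ (b - a) * log (1 - a) :=
        mul_le_mul_of_nonneg_left h1 hc.le
      have t2 : (1 - b) * log (1 - b) ≤ (1 - b) * log (1 - a) :=
        mul_le_mul_of_nonneg_left h2 h1b.le
      nlinarith [t1, t2]
    constructor
    · rw [one_div, one_div, Real.log_inv, Real.log_inv,
        Real.log_div hc.ne' (by positivity), Real.log_mul h1a.ne' hb0.ne']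
      nlinarith [key]
    · intro h; exact absurd h (ne_of_lt hlt)
end

section
/- Let N ≥ 1 be a natural number and b a real number with 0 < b ≤ 1/2. Let F : ℝ → ℝ be the cumulative distribution function of the Gamma distribution with shape 1/2 and rate 1/2 (i.e., of the chi-squared distribution with one degree of freedom), and define the minimum attainable p-value ψ(a) = 1 − F(2·N·B(a,b)). Then ψ is antitone on (0,b]: for all a₁, a₂ with 0 < a₁ ≤ a₂ ≤ b, ψ(a₂) ≤ ψ(a₁). Consequently, for any threshold σ ∈ (0,b], every a ∈ (0,b] with ψ(a) ≤ ψ(σ) satisfies a ≥ σ. -/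
/-!
Expanding the logarithms, `B(a, b) = η b + η (1 - a) - η (b - a)` with `η = negMulLog`, whose
derivative in `a` is `log (1 - a) - log (b - a) > 0` for `a < b < 1`. So `B(·, b)` increases
strictly from `B(0, b) = 0`; as the gamma density is positive on `(0, ∞)`, the gamma CDF increases
strictly on `[0, ∞)`, and therefore `ψ` is strictly decreasing on `(0, b]`.
-/

open Real Set MeasureTheory ProbabilityTheory

lemma gammaMeasure_Ioc_pos {a r x y : ℝ} (ha : 0 < a) (hr : 0 < r) (hx : 0 ≤ x) (hxy : x < y) :
    0 < gammaMeasure a r (Ioc x y) := by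
  have hsupp : Ioc x y ⊆ Function.support (gammaPDF a r) := fun t ht ↦
    (ENNReal.ofReal_pos.mpr (gammaPDFReal_pos ha hr (hx.trans_lt ht.1))).ne'
  rw [gammaMeasure, withDensity_apply _ measurableSet_Ioc,
    setLIntegral_pos_iff (f := gammaPDF a r) (measurable_gammaPDFReal a r).ennreal_ofReal,
    inter_eq_right.mpr hsupp, Real.volume_Ioc]
  exact ENNReal.ofReal_pos.mpr (sub_pos.mpr hxy)

lemma strictMonoOn_cdf_gammaMeasure {a r : ℝ} (ha : 0 < a) (hr : 0 < r) :
    StrictMonoOn (cdf (gammaMeasure a r)) (Ici 0) := by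
  intro x hx y _ hxy
  have := isProbabilityMeasure_gammaMeasure ha hr
  have hIoc := gammaMeasure_Ioc_pos ha hr hx hxy
  rw [← measure_cdf (gammaMeasure a r), StieltjesFunction.measure_Ioc, ENNReal.ofReal_pos,
    sub_pos] at hIoc
  exact hIoc

lemma strictMonoOn_negMulLog_sub_sub_negMulLog_sub {b c : ℝ} (hbc : b < c) :
    StrictMonoOn (fun a ↦ negMulLog (c - a) - negMulLog (b - a)) (Iic b) := by
  refine strictMonoOn_of_deriv_pos (convex_Iic b) (by fun_prop) fun a ha ↦ ?_
  rw [interior_Iic] at ha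
  have hba : 0 < b - a := sub_pos.mpr ha
  have hca : 0 < c - a := by linarith
  have hderiv : HasDerivAt (fun a ↦ negMulLog (c - a) - negMulLog (b - a))
      (log (c - a) - log (b - a)) a := by
    have hc := (hasDerivAt_negMulLog hca.ne').comp a ((hasDerivAt_id a).const_sub c)
    have hb := (hasDerivAt_negMulLog hba.ne').comp a ((hasDerivAt_id a).const_sub b)
    exact (hc.sub hb).congr_deriv (by ring)
  rw [hderiv.deriv, sub_pos]
  exact log_lt_log hba (by linarith)

/-- The paper's `B(a, b)`, as a function of `a`. -/
noncomputable def klBound (b a : ℝ) : ℝ :=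
  a * log (1 / b) + (b - a) * log ((b - a) / ((1 - a) * b)) + (1 - b) * log (1 / (1 - a))

lemma klBound_zero {b : ℝ} (hb : b ≠ 0) : klBound b 0 = 0 := by
  simp [klBound, hb]

lemma klBound_eq_negMulLog {a b : ℝ} (hb0 : 0 < b) (hb1 : b < 1) (hab : a ≤ b) :
    klBound b a = negMulLog b + (negMulLog (1 - a) - negMulLog (b - a)) := by
  simp only [klBound, negMulLog, one_div, log_inv]
  rcases hab.lt_or_eq with hab | rfl
  · rw [log_div (by linarith) (by nlinarith), log_mul (by linarith) hb0.ne']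
    ring
  · simp only [mul_neg, sub_self, zero_div, log_zero, mul_zero, add_zero, neg_mul, neg_sub,
      neg_zero, sub_zero, add_right_inj]
    ring

lemma klBound_strictMonoOn {b : ℝ} (hb0 : 0 < b) (hb1 : b < 1) :
    StrictMonoOn (klBound b) (Iic b) :=
  ((strictMonoOn_negMulLog_sub_sub_negMulLog_sub hb1).const_add _).congr
    fun _ ha ↦ (klBound_eq_negMulLog hb0 hb1 ha).symm

/-- Antitonicity of the minimum attainable p-value: with `F` the CDF of the Gamma
distribution with shape `1/2` and rate `1/2` (the chi-squared distribution with one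
degree of freedom) and `ψ(a) = 1 - F(2N·B(a,b))`, the function `ψ` is antitone on
`(0,b]`; consequently, for any threshold `σ ∈ (0,b]`, every `a ∈ (0,b]` with
`ψ(a) ≤ ψ(σ)` satisfies `a ≥ σ`. -/
theorem min_pvalue_antitone (N : ℕ) (hN : 1 ≤ N) (b : ℝ) (hb0 : 0 < b)
    (hb : b ≤ 1/2) (ψ : ℝ → ℝ)
    (hψ : ∀ a : ℝ, ψ a = 1 - ProbabilityTheory.cdf (ProbabilityTheory.gammaMeasure (1/2) (1/2))
      (2 * (N : ℝ) * (a * log (1 / b) + (b - a) * log ((b - a) / ((1 - a) * b))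
        + (1 - b) * log (1 / (1 - a))))) :
    (∀ a₁ a₂ : ℝ, 0 < a₁ → a₁ ≤ a₂ → a₂ ≤ b → ψ a₂ ≤ ψ a₁) ∧
    (∀ σ ∈ Set.Ioc (0 : ℝ) b, ∀ a ∈ Set.Ioc (0 : ℝ) b, ψ a ≤ ψ σ → σ ≤ a) := by
  have hψ' : ∀ a, ψ a = 1 - cdf (gammaMeasure (1/2) (1/2)) (2 * N * klBound b a) := hψ
  have hB := klBound_strictMonoOn hb0 (by linarith)
  have hN' : (0 : ℝ) < 2 * N := mul_pos two_pos (Nat.cast_pos.mpr hN)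
  have hψ_anti : StrictAntiOn ψ (Ioc 0 b) := by
    intro a ha σ hσ haσ
    have hBa : 0 < klBound b a := klBound_zero hb0.ne' ▸ hB (by simp [hb0.le]) ha.2 ha.1
    have hBaσ : klBound b a < klBound b σ := hB ha.2 hσ.2 haσ
    rw [hψ', hψ']
    exact sub_lt_sub_left (strictMonoOn_cdf_gammaMeasure (by norm_num) (by norm_num)
      (mul_nonneg hN'.le hBa.le) (mul_nonneg hN'.le (hBa.trans hBaσ).le)
      (mul_lt_mul_of_pos_left hBaσ hN')) 1
  exact ⟨fun a₁ a₂ h₁ h₁₂ h₂ ↦ hψ_anti.antitoneOn ⟨h₁, h₁₂.trans h₂⟩ ⟨h₁.trans_le h₁₂, h₂⟩ h₁₂,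
    fun σ hσ a ha h ↦ (hψ_anti.le_iff_ge ha hσ).mp h⟩
end
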